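/- Let σ^target be any bipartite assemblage, i.e. a family σ^target_{b|x} (b, x ∈ {0,1}) of positive semidefinite 2×2 complex matrices with ∑_b Tr[σ^target_{b|x}] = 1 for each x. Then there exists a tripartite assemblage σ_{a,b|x,y} (a, b, x, y ∈ {0,1}; positive semidefinite 2×2 complex matrices with ∑_{a,b} Tr[σ_{a,b|x,y}] = 1 for each x, y) that admits a local-hidden-state (LHS) model and satisfies ∑_{a∈{0,1}} σ_{a,b|x,a} = σ^target_{b|x} for all b, x. In other words, every bipartite assemblage can be obtained from an LHS tripartite assemblage by the wiring y = a. -/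

import Mathlib

open Matrix BigOperators ComplexOrder

noncomputable section

/-- A tripartite family `σ a b x y` (outputs `a,b`, inputs `x,y`) of 2×2 complex matrices
admits a local-hidden-state (LHS) model. -/
def IsLHS3 (σ : Fin 2 → Fin 2 → Fin 2 → Fin 2 → Matrix (Fin 2) (Fin 2) ℂ) : Prop :=
  ∃ (n : ℕ) (P : Fin n → ℝ) (ϱ : Fin n → Matrix (Fin 2) (Fin 2) ℂ)
    (q : Fin 2 → Fin 2 → Fin 2 → Fin 2 → Fin n → ℝ),
    (∀ l, 0 ≤ P l) ∧ (∑ l, P l = 1) ∧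
    (∀ l, (ϱ l).PosSemidef) ∧ (∀ l, (ϱ l).trace = 1) ∧
    (∀ a b x y l, 0 ≤ q a b x y l) ∧
    (∀ x y l, ∑ a, ∑ b, q a b x y l = 1) ∧
    (∀ a b x y, σ a b x y = ∑ l, (P l * q a b x y l) • ϱ l)

/-- Enumeration of pairs. -/
def f4 : Fin 4 → Fin 2 × Fin 2 := ![(0,0),(0,1),(1,0),(1,1)]

/-- Bit flip. -/
def fl : Fin 2 → Fin 2 := ![1,0]

/-- Real smul on a complex matrix equals complex-coe smul. -/
lemma real_smul_mat (r : ℝ) (M : Matrix (Fin 2) (Fin 2) ℂ) :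
    r • M = (r : ℂ) • M := by
  ext i j
  simp [Complex.real_smul]

/-- A PSD complex matrix scaled by a nonnegative real is PSD. -/
lemma psd_real_smul {M : Matrix (Fin 2) (Fin 2) ℂ} (h : M.PosSemidef)
    {c : ℝ} (hc : 0 ≤ c) : (c • M).PosSemidef := by
  rw [real_smul_mat, Matrix.posSemidef_iff_dotProduct_mulVec]
  constructor
  · have h1 := h.1
    unfold Matrix.IsHermitian at *
    rw [Matrix.conjTranspose_smul, h1, Complex.star_def, Complex.conj_ofReal]
  · intro v
    rw [Matrix.smul_mulVec, dotProduct_smul]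
    have h0 : (0 : ℂ) ≤ (c : ℂ) := by
      rw [Complex.nonneg_iff]; simp [hc]
    calc (0:ℂ) = (c:ℂ) * 0 := by ring
    _ ≤ (c:ℂ) * (star v ⬝ᵥ M *ᵥ v) := mul_le_mul_of_nonneg_left (h.dotProduct_mulVec_nonneg v) h0
    _ = (c:ℂ) • (star v ⬝ᵥ M *ᵥ v) := by rw [smul_eq_mul]

/-- A PSD matrix with trace zero is zero. -/
lemma psd_trace_zero {M : Matrix (Fin 2) (Fin 2) ℂ} (h : M.PosSemidef)
    (ht : M.trace = 0) : M = 0 := by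
  exact h.trace_eq_zero_iff.mp ht

/-- Every bipartite assemblage can be obtained from an LHS tripartite assemblage
by the wiring `y = a`. -/
theorem universal_steering_exposure
    (σt : Fin 2 → Fin 2 → Matrix (Fin 2) (Fin 2) ℂ)
    (hpsd : ∀ b x, (σt b x).PosSemidef)
    (hnorm : ∀ x, ∑ b, (σt b x).trace = 1) :
    ∃ σ : Fin 2 → Fin 2 → Fin 2 → Fin 2 → Matrix (Fin 2) (Fin 2) ℂ,
      (∀ a b x y, (σ a b x y).PosSemidef) ∧
      (∀ x y, ∑ a, ∑ b, (σ a b x y).trace = 1) ∧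
      IsLHS3 σ ∧
      (∀ b x, ∑ a, σ a b x a = σt b x) := by
  classical
  -- the trace of each σt b x is a nonnegative real number T b x
  set T : Fin 2 → Fin 2 → ℝ := fun b x => ((σt b x).trace).re with hTdef
  have htrnn : ∀ b x, 0 ≤ (σt b x).trace := by
    intro b x
    rw [Matrix.trace]
    refine Finset.sum_nonneg fun i _ => ?_
    have := (hpsd b x).dotProduct_mulVec_nonneg (Pi.single i 1)
    simpa [Matrix.mulVec_single, dotProduct, Pi.single_apply, Matrix.diag] using this
  have htr : ∀ b x, (σt b x).trace = (T b x : ℂ) := by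
    intro b x
    have him : ((σt b x).trace).im = 0 := ((Complex.nonneg_iff.mp (htrnn b x)).2).symm
    refine Complex.ext ?_ ?_
    · simp [hTdef]
    · simp [him]
  have hTnn : ∀ b x, 0 ≤ T b x := fun b x => (Complex.nonneg_iff.mp (htrnn b x)).1
  have hsum : ∀ x, T 0 x + T 1 x = 1 := by
    intro x
    have h := hnorm x
    rw [Fin.sum_univ_two, htr, htr] at h
    exact_mod_cast h
  -- hidden states
  set ρ : Fin 2 → Fin 2 → Matrix (Fin 2) (Fin 2) ℂ :=
    fun b x => if T b x = 0 then Matrix.diagonal ![1, 0] else (T b x)⁻¹ • σt b x with hρdef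
  have hρpsd : ∀ b x, (ρ b x).PosSemidef := by
    intro b x
    rw [hρdef]
    by_cases h0 : T b x = 0
    · simp only [h0, if_true]
      refine Matrix.PosSemidef.diagonal ?_
      intro i
      fin_cases i <;> simp
    · simp only [h0, if_false]
      exact psd_real_smul (hpsd b x) (inv_nonneg.mpr (hTnn b x))
  have hρtr : ∀ b x, (ρ b x).trace = 1 := by
    intro b x
    rw [hρdef]
    by_cases h0 : T b x = 0
    · simp [h0, Matrix.trace, Matrix.diag]
    · simp only [h0, if_false]
      rw [real_smul_mat, Matrix.trace_smul, htr b x, smul_eq_mul]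
      norm_cast
      exact inv_mul_cancel₀ h0
  have hTρ : ∀ b x, (T b x) • ρ b x = σt b x := by
    intro b x
    rw [hρdef]
    by_cases h0 : T b x = 0
    · simp only [h0, if_true, zero_smul]
      exact (psd_trace_zero (hpsd b x) (by rw [htr b x, h0]; simp)).symm
    · simp only [h0, if_false, smul_smul, mul_inv_cancel₀ h0, one_smul]
  -- the tripartite assemblage
  refine ⟨fun a b x y => (2⁻¹ : ℝ) • σt b (if a = y then x else fl x), ?_, ?_, ?_, ?_⟩
  · intro a b x y
    exact psd_real_smul (hpsd _ _) (by norm_num)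
  · intro x y
    have htr2 : ∀ b x', ((2⁻¹ : ℝ) • σt b x').trace = ((2⁻¹ : ℝ) : ℂ) * (σt b x').trace := by
      intro b x'
      rw [real_smul_mat, Matrix.trace_smul, smul_eq_mul]
    have h0 := hnorm 0
    have h1 := hnorm 1
    rw [Fin.sum_univ_two] at h0 h1
    fin_cases x <;> fin_cases y <;>
      simp only [Fin.sum_univ_two, htr2, fl, Matrix.cons_val_zero, Matrix.cons_val_one,
        Matrix.head_cons] <;>
      norm_num <;>
      linear_combination (2⁻¹ : ℂ) * h0 + (2⁻¹ : ℂ) * h1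
  · -- LHS model
    refine ⟨4, fun l => T (f4 l).1 (f4 l).2 / 2, fun l => ρ (f4 l).1 (f4 l).2,
      fun a b x y l => if b = (f4 l).1 ∧ ((a = y) ↔ (x = (f4 l).2)) then 1 else 0,
      ?_, ?_, ?_, ?_, ?_, ?_, ?_⟩
    · intro l; exact div_nonneg (hTnn _ _) (by norm_num)
    · rw [Fin.sum_univ_four]
      simp only [f4, Matrix.cons_val_zero, Matrix.cons_val_one, Matrix.head_cons,
        Matrix.cons_val_two, Matrix.tail_cons, Matrix.cons_val_three, Matrix.cons_val_fin_one]
      have g0 := hsum 0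
      have g1 := hsum 1
      linarith
    · intro l; exact hρpsd _ _
    · intro l; exact hρtr _ _
    · intro a b x y l
      by_cases h : b = (f4 l).1 ∧ ((a = y) ↔ (x = (f4 l).2)) <;> simp [h]
    · intro x y l
      fin_cases l <;> fin_cases x <;> fin_cases y <;>
        simp [f4, Fin.sum_univ_two] <;> decide
    · intro a b x y
      rw [Fin.sum_univ_four]
      fin_cases a <;> fin_cases b <;> fin_cases x <;> fin_cases y <;>
        simp [f4, fl, div_eq_mul_inv, mul_comm] <;> rw [← smul_smul, hTρ]
  · intro b x
    rw [Fin.sum_univ_two]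
    simp only [if_pos rfl]
    rw [← add_smul]
    norm_num
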